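/- arXiv:2211.13071 — 2 statements merged into one kernel-verified Lean document; each statement's English description precedes it below -/
import Mathlib

section
/- Let G be a groupoid, R an associative ring, and α = (D_g, α_g)_{g∈G} a partial action of G on R such that D_g is s-unital for every g ∈ G and R = ⊕_{e∈G₀} D_e. If I is a two-sided ideal of the partial skew groupoid ring R ⋊_α G, then P₀(I ∩ ⊕_{e∈G₀} D_e δ_e) is a G-invariant ideal of R. -/
open scoped Classical

/-- A (discrete) groupoid, presented as its set of morphisms `G`, with source map `s`,
range map `r`, inversion `inv` and a partially defined multiplication `mul`.
The units (identity morphisms, i.e. the objects) are the elements `e` with `r e = e`. -/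
structure DGroupoid (G : Type*) where
  s : G → G
  r : G → G
  inv : G → G
  mul : (g h : G) → s g = r h → G
  s_inv : ∀ g, s (inv g) = r g
  r_inv : ∀ g, r (inv g) = s g
  inv_inv : ∀ g, inv (inv g) = g
  r_mul : ∀ g h (p : s g = r h), r (mul g h p) = r g
  s_mul : ∀ g h (p : s g = r h), s (mul g h p) = s h
  r_idem : ∀ g, r (r g) = r g
  s_of_r : ∀ g, s (r g) = r g
  r_of_s : ∀ g, r (s g) = s g
  s_idem : ∀ g, s (s g) = s g
  assoc : ∀ g h k (p : s g = r h) (q : s h = r k) (pq : s (mul g h p) = r k)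
      (qp : s g = r (mul h k q)), mul (mul g h p) k pq = mul g (mul h k q) qp
  id_mul : ∀ g (p : s (r g) = r g), mul (r g) g p = g
  mul_id : ∀ g (p : s g = r (s g)), mul g (s g) p = g
  mul_inv : ∀ g (p : s g = r (inv g)), mul g (inv g) p = r g
  inv_mul : ∀ g (p : s (inv g) = r g), mul (inv g) g p = s g

namespace DGroupoid

/-- `e` is a unit (an object, identified with its identity morphism) of the groupoid. -/
def unit {G : Type*} (𝔾 : DGroupoid G) (e : G) : Prop := 𝔾.r e = e

end DGroupoid

section RingDefs

variable {R : Type*} [NonUnitalRing R]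

/-- A subset of a (possibly non-unital) ring is a two-sided ideal. -/
def IsRingIdeal (J : Set R) : Prop :=
  (0 : R) ∈ J ∧ (∀ x ∈ J, ∀ y ∈ J, x + y ∈ J) ∧ (∀ x ∈ J, -x ∈ J) ∧
    ∀ x ∈ J, ∀ y : R, x * y ∈ J ∧ y * x ∈ J

/-- A subset of a ring, viewed as a ring, is s-unital: every `x` in it lies in
`xT ∩ Tx`. -/
def IsSUnitalSet (J : Set R) : Prop :=
  ∀ x ∈ J, (∃ u ∈ J, x * u = x) ∧ (∃ v ∈ J, v * x = x)

end RingDefs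

/-- A partial action `α = (D_g, α_g)_{g ∈ G}` of a groupoid `𝔾` on a
(possibly non-unital, associative) ring `R`:  each `D_{r g}` is a two-sided ideal of `R`,
each `D_g` is a two-sided ideal of `D_{r g}`, and `α_g = act g` restricts to a ring
isomorphism `D_{g⁻¹} → D_g` (the function `act g` is arbitrary outside `D_{g⁻¹}`),
satisfying the axioms of a partial action. -/
structure PartialAction {G : Type*} (𝔾 : DGroupoid G) (R : Type*) [NonUnitalRing R] where
  D : G → Set R
  zero_mem : ∀ g, (0 : R) ∈ D g
  add_mem : ∀ g, ∀ x ∈ D g, ∀ y ∈ D g, x + y ∈ D g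
  neg_mem : ∀ g, ∀ x ∈ D g, -x ∈ D g
  subset_r : ∀ g, D g ⊆ D (𝔾.r g)
  idealR : ∀ g, IsRingIdeal (D (𝔾.r g))
  idealInR : ∀ g, ∀ x ∈ D g, ∀ y ∈ D (𝔾.r g), x * y ∈ D g ∧ y * x ∈ D g
  act : G → R → R
  act_mem : ∀ g, ∀ x ∈ D (𝔾.inv g), act g x ∈ D g
  act_add : ∀ g, ∀ x ∈ D (𝔾.inv g), ∀ y ∈ D (𝔾.inv g), act g (x + y) = act g x + act g y
  act_mul : ∀ g, ∀ x ∈ D (𝔾.inv g), ∀ y ∈ D (𝔾.inv g), act g (x * y) = act g x * act g y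
  act_inv : ∀ g, ∀ x ∈ D (𝔾.inv g), act (𝔾.inv g) (act g x) = x
  act_unit : ∀ e, 𝔾.unit e → ∀ x ∈ D e, act e x = x
  act_comp_mem : ∀ g h (p : 𝔾.s g = 𝔾.r h), ∀ x, x ∈ D (𝔾.inv g) → x ∈ D h →
      act (𝔾.inv h) x ∈ D (𝔾.inv (𝔾.mul g h p))
  act_comp : ∀ g h (p : 𝔾.s g = 𝔾.r h), ∀ x ∈ D (𝔾.inv h), act h x ∈ D (𝔾.inv g) →
      act g (act h x) = act (𝔾.mul g h p) x

namespace PartialAction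

variable {G : Type*} {R : Type*} [NonUnitalRing R] {𝔾 : DGroupoid G} (P : PartialAction 𝔾 R)

/-- `R = ⊕_{e ∈ G₀} D_e`: every element of `R` decomposes as a finite sum of elements
of the `D_e` (`e` a unit), and the decomposition is unique (a finite sum of elements of
the distinct `D_e`'s which vanishes has all terms zero). -/
def directSum : Prop :=
  (∀ x : R, ∃ f : G →₀ R, (∀ g ∈ f.support, 𝔾.unit g) ∧ (∀ g, f g ∈ P.D g) ∧
      (f.sum fun _ v => v) = x) ∧
    ∀ f : G →₀ R, (∀ g ∈ f.support, 𝔾.unit g) → (∀ g, f g ∈ P.D g) →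
      (f.sum fun _ v => v) = 0 → f = 0

/-- The carrier of the partial skew groupoid ring `R ⋊_α G`: finitely supported
functions `a : G →₀ R` (thought of as `Σ_g a_g δ_g`) with `a g ∈ D g`. -/
def carrier : Set (G →₀ R) := {a | ∀ g, a g ∈ P.D g}

/-- The multiplication of the partial skew groupoid ring:
`(a_g δ_g)(b_h δ_h) = α_g(α_{g⁻¹}(a_g) b_h) δ_{gh}` when `(g,h)` is composable,
and `0` otherwise. -/
noncomputable def skewMul (a b : G →₀ R) : G →₀ R :=
  a.support.sum fun g => b.support.sum fun h =>
    if p : 𝔾.s g = 𝔾.r h then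
      Finsupp.single (𝔾.mul g h p) (P.act g (P.act (𝔾.inv g) (a g) * b h))
    else 0

/-- The subset `⊕_{e ∈ G₀} D_e δ_e` of `R ⋊_α G`: elements supported on units. -/
def diag : Set (G →₀ R) := {a | (∀ g, a g ∈ P.D g) ∧ ∀ g ∈ a.support, 𝔾.unit g}

/-- `I` is a two-sided ideal of the partial skew groupoid ring `R ⋊_α G`. -/
def IsSkewIdeal (I : Set (G →₀ R)) : Prop :=
  I ⊆ P.carrier ∧ (0 : G →₀ R) ∈ I ∧ (∀ x ∈ I, ∀ y ∈ I, x + y ∈ I) ∧ (∀ x ∈ I, -x ∈ I) ∧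
    ∀ x ∈ I, ∀ y ∈ P.carrier, P.skewMul x y ∈ I ∧ P.skewMul y x ∈ I

/-- The projection `P₀ : R ⋊_α G → R`, `Σ_g a_g δ_g ↦ Σ_{e ∈ G₀} a_e`. -/
noncomputable def P0 (_P : PartialAction 𝔾 R) (a : G →₀ R) : R :=
  a.sum fun g v => if 𝔾.unit g then v else 0

/-- An ideal `I` of `R ⋊_α G` is `G`-graded if it is generated by its homogeneous
components, i.e. `I = ⊕_g (I ∩ D_g δ_g)`. -/
def IsGradedIdeal (I : Set (G →₀ R)) : Prop :=
  P.IsSkewIdeal I ∧ ∀ a ∈ I, ∀ g : G, Finsupp.single g (a g) ∈ I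

/-- `J` is a `G`-invariant (two-sided) ideal of `R`: `α_g(D_{g⁻¹} ∩ J) ⊆ J`. -/
def IsInvIdeal (J : Set R) : Prop :=
  IsRingIdeal J ∧ ∀ g, ∀ x ∈ P.D (𝔾.inv g) ∩ J, P.act g x ∈ J

/-- The subset `J ⋊_{α^J} G = ⊕_g (J ∩ D_g) δ_g` of `R ⋊_α G` attached to a
`G`-invariant ideal `J` of `R`. -/
def skewOf (J : Set R) : Set (G →₀ R) := {a | ∀ g, a g ∈ P.D g ∩ J}

/-- `⊕_{e ∈ G₀} D_e δ_e` is a maximal commutative subring of `R ⋊_α G`: it is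
commutative and coincides with its centralizer. -/
def IsMaxCommDiag : Prop :=
  (∀ a ∈ P.diag, ∀ b ∈ P.diag, P.skewMul a b = P.skewMul b a) ∧
    ∀ b ∈ P.carrier, (∀ a ∈ P.diag, P.skewMul a b = P.skewMul b a) → b ∈ P.diag

/-- The partial action has the intersection property: every nonzero ideal of
`R ⋊_α G` intersects `⊕_{e ∈ G₀} D_e δ_e` nontrivially. -/
def HasIntersectionProperty : Prop :=
  ∀ I : Set (G →₀ R), P.IsSkewIdeal I → I ≠ {0} → I ∩ P.diag ≠ {0}

/-- `R` is `G`-simple: the only `G`-invariant ideals of `R` are `{0}` and `R`. -/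
def GSimple : Prop := ∀ J : Set R, P.IsInvIdeal J → J = {0} ∨ J = Set.univ

/-- `R` is `G`-prime: if `I, J` are `G`-invariant ideals with `IJ = {0}`, then
`I = {0}` or `J = {0}`. -/
def GPrime : Prop :=
  ∀ I J : Set R, P.IsInvIdeal I → P.IsInvIdeal J →
    (∀ x ∈ I, ∀ y ∈ J, x * y = 0) → I = {0} ∨ J = {0}

/-- `R ⋊_α G` is graded simple. -/
def GradedSimple : Prop :=
  ∀ I : Set (G →₀ R), P.IsGradedIdeal I → I = {0} ∨ I = P.carrier

/-- `R ⋊_α G` is graded prime. -/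
def GradedPrime : Prop :=
  ∀ I J : Set (G →₀ R), P.IsGradedIdeal I → P.IsGradedIdeal J →
    (∀ x ∈ I, ∀ y ∈ J, P.skewMul x y = 0) → I = {0} ∨ J = {0}

/-- `R ⋊_α G` is a prime ring. -/
def SkewPrime : Prop :=
  ∀ I J : Set (G →₀ R), P.IsSkewIdeal I → P.IsSkewIdeal J →
    (∀ x ∈ I, ∀ y ∈ J, P.skewMul x y = 0) → I = {0} ∨ J = {0}

/-- `R ⋊_α G` is a simple ring. -/
def SkewSimple : Prop :=
  ∀ I : Set (G →₀ R), P.IsSkewIdeal I → I = {0} ∨ I = P.carrier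

end PartialAction

section AuxLemmas

variable {G R : Type*} [NonUnitalRing R]

lemma aux_mul_congr (𝔾 : DGroupoid G) {g g' h h' : G} (hg : g = g') (hh : h = h')
    (p : 𝔾.s g = 𝔾.r h) (p' : 𝔾.s g' = 𝔾.r h') : 𝔾.mul g h p = 𝔾.mul g' h' p' := by
  subst hg; subst hh; rfl

lemma aux_s_unit (𝔾 : DGroupoid G) {e : G} (he : 𝔾.unit e) : 𝔾.s e = e := by
  have he' : 𝔾.r e = e := he
  conv_lhs => rw [← he']
  rw [𝔾.s_of_r, he']

lemma aux_inv_unit (𝔾 : DGroupoid G) {e : G} (he : 𝔾.unit e) : 𝔾.inv e = e := by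
  have he' : 𝔾.r e = e := he
  have h1 : 𝔾.r (𝔾.inv e) = e := by rw [𝔾.r_inv, aux_s_unit 𝔾 he]
  have p : 𝔾.s (𝔾.r (𝔾.inv e)) = 𝔾.r (𝔾.inv e) := 𝔾.s_of_r _
  have h2 := 𝔾.id_mul (𝔾.inv e) p
  have p' : 𝔾.s e = 𝔾.r (𝔾.inv e) := by rw [h1, aux_s_unit 𝔾 he]
  have h3 := 𝔾.mul_inv e p'
  have h4 : 𝔾.mul (𝔾.r (𝔾.inv e)) (𝔾.inv e) p = 𝔾.mul e (𝔾.inv e) p' :=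
    aux_mul_congr 𝔾 h1 rfl p p'
  rw [h4, h3] at h2
  rw [← h2, he']

variable {𝔾 : DGroupoid G} (P : PartialAction 𝔾 R)

lemma aux_act_zero (g : G) : P.act g 0 = 0 := by
  have h := P.act_add g 0 (P.zero_mem _) 0 (P.zero_mem _)
  rw [add_zero] at h
  exact add_eq_left.mp h.symm

lemma aux_ideal_unit {e : G} (he : 𝔾.unit e) : IsRingIdeal (P.D e) := by
  have he' : 𝔾.r e = e := he
  have := P.idealR e
  rwa [he'] at this

lemma aux_disjoint (hds : P.directSum) {e e' : G} (he : 𝔾.unit e) (he' : 𝔾.unit e')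
    (hne : e ≠ e') {z : R} (hz : z ∈ P.D e) (hz' : z ∈ P.D e') : z = 0 := by
  set f : G →₀ R := Finsupp.single e z - Finsupp.single e' z with hf
  have hsupp : ∀ g ∈ f.support, 𝔾.unit g := by
    intro g hg
    have := Finsupp.support_sub hg
    rcases Finset.mem_union.mp this with h | h
    · have := Finsupp.support_single_subset h
      rw [Finset.mem_singleton] at this; subst this; exact he
    · have := Finsupp.support_single_subset h
      rw [Finset.mem_singleton] at this; subst this; exact he'
  have hmem : ∀ g, f g ∈ P.D g := by
    intro g
    rw [hf, Finsupp.sub_apply, Finsupp.single_apply, Finsupp.single_apply]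
    by_cases h1 : e = g
    · subst h1
      rw [if_pos rfl, if_neg (fun h => hne h.symm), sub_zero]
      exact hz
    · rw [if_neg h1, zero_sub]
      by_cases h2 : e' = g
      · subst h2; rw [if_pos rfl]; exact P.neg_mem _ _ hz'
      · rw [if_neg h2, neg_zero]; exact P.zero_mem _
  have hsum : f.sum (fun _ v => v) = 0 := by
    rw [hf, Finsupp.sum_sub_index (fun _ _ _ => rfl),
      Finsupp.sum_single_index rfl, Finsupp.sum_single_index rfl, sub_self]
  have hf0 := hds.2 f hsupp hmem hsum
  have := DFunLike.congr_fun hf0 e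
  rw [hf, Finsupp.sub_apply, Finsupp.single_eq_same, Finsupp.single_apply,
    if_neg (fun h => hne h.symm), sub_zero] at this
  exact this

/-- `P0` as an additive monoid homomorphism. -/
noncomputable def auxP0hom (𝔾 : DGroupoid G) : (G →₀ R) →+ R :=
  Finsupp.liftAddHom (fun g => if 𝔾.unit g then AddMonoidHom.id R else 0)

lemma aux_P0_eq (a : G →₀ R) : P.P0 a = auxP0hom 𝔾 a := by
  rw [PartialAction.P0, auxP0hom, Finsupp.liftAddHom_apply]
  apply Finsupp.sum_congr
  intro g _
  by_cases h : 𝔾.unit g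
  · rw [if_pos h, if_pos h]; rfl
  · rw [if_neg h, if_neg h]; rfl

lemma aux_P0_zero : P.P0 (0 : G →₀ R) = 0 := by
  rw [aux_P0_eq]; exact map_zero _

lemma aux_P0_add (a b : G →₀ R) : P.P0 (a + b) = P.P0 a + P.P0 b := by
  rw [aux_P0_eq, aux_P0_eq, aux_P0_eq]; exact map_add _ _ _

lemma aux_P0_neg (a : G →₀ R) : P.P0 (-a) = -P.P0 a := by
  rw [aux_P0_eq, aux_P0_eq]; exact map_neg _ _

lemma aux_P0_finsetSum {ι : Type*} (s : Finset ι) (c : ι → (G →₀ R)) :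
    P.P0 (∑ i ∈ s, c i) = ∑ i ∈ s, P.P0 (c i) := by
  rw [aux_P0_eq, map_sum]
  exact Finset.sum_congr rfl fun i _ => (aux_P0_eq P (c i)).symm

lemma aux_P0_single (g : G) (v : R) :
    P.P0 (Finsupp.single g v) = if 𝔾.unit g then v else 0 := by
  rw [aux_P0_eq, auxP0hom, Finsupp.liftAddHom_apply_single]
  by_cases h : 𝔾.unit g
  · rw [if_pos h, if_pos h]; rfl
  · rw [if_neg h, if_neg h]; rfl

lemma aux_P0_of_units (a : G →₀ R) (hau : ∀ g ∈ a.support, 𝔾.unit g) :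
    P.P0 a = ∑ g ∈ a.support, a g := by
  rw [PartialAction.P0, Finsupp.sum]
  exact Finset.sum_congr rfl fun g hg => if_pos (hau g hg)

lemma aux_single_carrier {g : G} {u : R} (hu : u ∈ P.D g) :
    (Finsupp.single g u) ∈ P.carrier := by
  intro h
  rw [Finsupp.single_apply]
  by_cases hh : g = h
  · subst hh; rw [if_pos rfl]; exact hu
  · rw [if_neg hh]; exact P.zero_mem h

lemma aux_single_diag {e : G} {v : R} (he : 𝔾.unit e) (hv : v ∈ P.D e) :
    (Finsupp.single e v) ∈ P.diag := by
  refine ⟨aux_single_carrier P hv, fun h hh => ?_⟩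
  have := Finsupp.support_single_subset hh
  rw [Finset.mem_singleton] at this; subst this; exact he

lemma aux_skewMul_single_single (g h : G) (u v : R) :
    P.skewMul (Finsupp.single g u) (Finsupp.single h v) =
      if p : 𝔾.s g = 𝔾.r h then
        Finsupp.single (𝔾.mul g h p) (P.act g (P.act (𝔾.inv g) u * v)) else 0 := by
  rcases eq_or_ne u 0 with rfl | hu0
  · rw [PartialAction.skewMul]
    simp [aux_act_zero]
  rcases eq_or_ne v 0 with rfl | hv0
  · rw [PartialAction.skewMul]
    simp [aux_act_zero]
  rw [PartialAction.skewMul, Finsupp.support_single_ne_zero _ hu0,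
    Finsupp.support_single_ne_zero _ hv0, Finset.sum_singleton, Finset.sum_singleton,
    Finsupp.single_eq_same, Finsupp.single_eq_same]

lemma aux_skewMul_single_diag (g : G) (u : R) (a : G →₀ R)
    (ha : ∀ h ∈ a.support, 𝔾.unit h) :
    P.skewMul (Finsupp.single g u) a =
      Finsupp.single g (P.act g (P.act (𝔾.inv g) u * a (𝔾.s g))) := by
  rcases eq_or_ne u 0 with rfl | hu0
  · rw [PartialAction.skewMul]
    simp [aux_act_zero]
  rw [PartialAction.skewMul, Finsupp.support_single_ne_zero _ hu0, Finset.sum_singleton,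
    Finsupp.single_eq_same]
  rw [Finset.sum_eq_single (𝔾.s g)]
  · rw [dif_pos (𝔾.r_of_s g).symm, 𝔾.mul_id]
  · intro h hh hne
    rw [dif_neg]
    intro p
    exact hne ((ha h hh) ▸ p).symm
  · intro hns
    have ha0 : a (𝔾.s g) = 0 := Finsupp.notMem_support_iff.mp hns
    rw [dif_pos (𝔾.r_of_s g).symm, ha0, mul_zero, aux_act_zero, Finsupp.single_zero]

lemma aux_skewMul_diag (a b : G →₀ R)
    (hau : ∀ g ∈ a.support, 𝔾.unit g) (haD : ∀ g, a g ∈ P.D g)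
    (hbu : ∀ g ∈ b.support, 𝔾.unit g) :
    P.skewMul a b = ∑ g ∈ a.support, Finsupp.single g (a g * b g) := by
  rw [PartialAction.skewMul]
  apply Finset.sum_congr rfl
  intro g hg
  have hgu := hau g hg
  have hsg : 𝔾.s g = g := aux_s_unit 𝔾 hgu
  have hrg : 𝔾.r g = g := hgu
  rw [Finset.sum_eq_single g]
  · have p : 𝔾.s g = 𝔾.r g := hsg.trans hrg.symm
    rw [dif_pos p]
    have hmul : 𝔾.mul g g p = g := by
      have p' : 𝔾.s g = 𝔾.r (𝔾.s g) := (𝔾.r_of_s g).symm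
      rw [aux_mul_congr 𝔾 rfl hsg.symm p p', 𝔾.mul_id]
    have hact : P.act (𝔾.inv g) (a g) = a g := by
      rw [aux_inv_unit 𝔾 hgu]
      exact P.act_unit g hgu (a g) (haD g)
    have hprod : a g * b g ∈ P.D g :=
      ((aux_ideal_unit P hgu).2.2.2 (a g) (haD g) (b g)).1
    rw [hmul, hact, P.act_unit g hgu _ hprod]
  · intro h hh hne
    rw [dif_neg]
    intro p
    exact hne (((hbu h hh) ▸ p).symm.trans hsg)
  · intro hns
    have hb0 : b g = 0 := Finsupp.notMem_support_iff.mp hns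
    have p : 𝔾.s g = 𝔾.r g := hsg.trans hrg.symm
    rw [dif_pos p, hb0, mul_zero, aux_act_zero, Finsupp.single_zero]

lemma aux_eval {s : Finset G} (c : G → R) (h : G) :
    (∑ g ∈ s, Finsupp.single g (c g)) h = if h ∈ s then c h else 0 := by
  rw [Finsupp.finset_sum_apply]
  rw [show (fun g => (Finsupp.single g (c g)) h) = fun g => if g = h then c g else 0 from
    funext fun g => Finsupp.single_apply]
  rw [Finset.sum_ite_eq' s h c]

lemma aux_component (hds : P.directSum) (a : G →₀ R)
    (hau : ∀ g ∈ a.support, 𝔾.unit g) (haD : ∀ g, a g ∈ P.D g)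
    {e : G} (he : 𝔾.unit e) {x : R} (hx : x ∈ P.D e)
    (hP : a.sum (fun _ v => v) = x) : a e = x := by
  set f : G →₀ R := a - Finsupp.single e x with hf
  have hsupp : ∀ g ∈ f.support, 𝔾.unit g := by
    intro g hg
    rcases Finset.mem_union.mp (Finsupp.support_sub hg) with h | h
    · exact hau g h
    · have := Finsupp.support_single_subset h
      rw [Finset.mem_singleton] at this; subst this; exact he
  have hmem : ∀ g, f g ∈ P.D g := by
    intro g
    rw [hf, Finsupp.sub_apply, Finsupp.single_apply]
    by_cases h1 : e = g
    · subst h1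
      rw [if_pos rfl, sub_eq_add_neg]
      exact P.add_mem _ _ (haD e) _ (P.neg_mem _ _ hx)
    · rw [if_neg h1, sub_zero]; exact haD g
  have hsum : f.sum (fun _ v => v) = 0 := by
    rw [hf, Finsupp.sum_sub_index (fun _ _ _ => rfl), hP,
      Finsupp.sum_single_index rfl, sub_self]
  have hf0 := hds.2 f hsupp hmem hsum
  have := DFunLike.congr_fun hf0 e
  rw [hf, Finsupp.sub_apply, Finsupp.single_eq_same] at this
  exact sub_eq_zero.mp this

lemma aux_skewMul_diag_mem (hds : P.directSum) (a b : G →₀ R)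
    (hau : ∀ g ∈ a.support, 𝔾.unit g) (haD : ∀ g, a g ∈ P.D g)
    (hbu : ∀ g ∈ b.support, 𝔾.unit g) (hbD : ∀ g, b g ∈ P.D g) :
    P.skewMul a b ∈ P.diag ∧ P.P0 (P.skewMul a b) = P.P0 a * P.P0 b := by
  rw [aux_skewMul_diag P a b hau haD hbu]
  constructor
  · constructor
    · intro h
      rw [aux_eval]
      by_cases hh : h ∈ a.support
      · rw [if_pos hh]
        exact ((aux_ideal_unit P (hau h hh)).2.2.2 (a h) (haD h) (b h)).1
      · rw [if_neg hh]; exact P.zero_mem h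
    · intro h hh
      rw [Finsupp.mem_support_iff, aux_eval] at hh
      by_cases hmem : h ∈ a.support
      · exact hau h hmem
      · rw [if_neg hmem] at hh; exact absurd rfl hh
  · rw [aux_P0_finsetSum, aux_P0_of_units P a hau, aux_P0_of_units P b hbu,
      Finset.sum_mul]
    apply Finset.sum_congr rfl
    intro g hg
    rw [aux_P0_single, if_pos (hau g hg), Finset.mul_sum]
    rw [Finset.sum_eq_single g]
    · intro h hh hne
      refine aux_disjoint P hds (hau g hg) (hbu h hh) hne.symm ?_ ?_
      · exact ((aux_ideal_unit P (hau g hg)).2.2.2 (a g) (haD g) (b h)).1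
      · exact ((aux_ideal_unit P (hbu h hh)).2.2.2 (b h) (hbD h) (a g)).2
    · intro hns
      rw [Finsupp.notMem_support_iff.mp hns, mul_zero]

end AuxLemmas

/-- If `I` is a two-sided ideal of the partial skew groupoid ring
`R ⋊_α G`, then `P₀(I ∩ ⊕_{e ∈ G₀} D_e δ_e)` is a `G`-invariant ideal of `R`. -/
theorem P0_image_inter_diag_isInvIdeal {G R : Type*} [NonUnitalRing R]
    (𝔾 : DGroupoid G) (P : PartialAction 𝔾 R)
    (hsu : ∀ g, IsSUnitalSet (P.D g)) (hds : P.directSum)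
    (I : Set (G →₀ R)) (hI : P.IsSkewIdeal I) :
    P.IsInvIdeal (P.P0 '' (I ∩ P.diag)) := by
  obtain ⟨hIc, hI0, hIadd, hIneg, hImul⟩ := hI
  have hdiag0 : (0 : G →₀ R) ∈ P.diag := by
    refine ⟨fun g => P.zero_mem g, fun g hg => ?_⟩
    simp at hg
  constructor
  · -- IsRingIdeal
    refine ⟨⟨0, ⟨hI0, hdiag0⟩, aux_P0_zero P⟩, ?_, ?_, ?_⟩
    · rintro x ⟨a, ⟨haI, haD, haU⟩, rfl⟩ y ⟨b, ⟨hbI, hbD, hbU⟩, rfl⟩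
      refine ⟨a + b, ⟨hIadd a haI b hbI, fun g => ?_, fun g hg => ?_⟩,
        (aux_P0_add P a b)⟩
      · rw [Finsupp.add_apply]; exact P.add_mem g _ (haD g) _ (hbD g)
      · rcases Finset.mem_union.mp (Finsupp.support_add hg) with h | h
        · exact haU g h
        · exact hbU g h
    · rintro x ⟨a, ⟨haI, haD, haU⟩, rfl⟩
      refine ⟨-a, ⟨hIneg a haI, fun g => ?_, fun g hg => ?_⟩, (aux_P0_neg P a)⟩
      · rw [Finsupp.neg_apply]; exact P.neg_mem g _ (haD g)
      · rw [Finsupp.support_neg] at hg; exact haU g hg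
    · rintro x ⟨a, ⟨haI, haD, haU⟩, rfl⟩ y
      obtain ⟨f, hfU, hfD, hfs⟩ := hds.1 y
      have hfc : f ∈ P.carrier := hfD
      have hfP0 : P.P0 f = y := by
        rw [aux_P0_of_units P f hfU, ← hfs]; rfl
      constructor
      · obtain ⟨hd, hp⟩ := aux_skewMul_diag_mem P hds a f haU haD hfU hfD
        exact ⟨P.skewMul a f, ⟨(hImul a haI f hfc).1, hd⟩, by rw [hp, hfP0]⟩
      · obtain ⟨hd, hp⟩ := aux_skewMul_diag_mem P hds f a hfU hfD haU haD
        exact ⟨P.skewMul f a, ⟨(hImul a haI f hfc).2, hd⟩, by rw [hp, hfP0]⟩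
  · -- G-invariance
    rintro g x ⟨hxD, a, ⟨haI, haD, haU⟩, hxP⟩
    obtain ⟨⟨w, hw, hxw⟩, ⟨u', hu', hu'x⟩⟩ := hsu (𝔾.inv g) x hxD
    have hsgu : 𝔾.unit (𝔾.s g) := 𝔾.r_of_s g
    have hxDs : x ∈ P.D (𝔾.s g) := by
      have := P.subset_r (𝔾.inv g) hxD
      rwa [𝔾.r_inv] at this
    have hasg : a (𝔾.s g) = x := by
      refine aux_component P hds a haU haD hsgu hxDs ?_
      rw [← hxP, aux_P0_of_units P a haU]; rfl
    set u : R := P.act g u' with hu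
    have huD : u ∈ P.D g := P.act_mem g u' hu'
    have hd : P.skewMul (Finsupp.single g u) a = Finsupp.single g (P.act g x) := by
      rw [aux_skewMul_single_diag P g u a haU, hasg, hu, P.act_inv g u' hu', hu'x]
    have hdI : Finsupp.single g (P.act g x) ∈ I := by
      rw [← hd]
      exact (hImul a haI _ (aux_single_carrier P huD)).2
    have hfin : P.skewMul (Finsupp.single g (P.act g x)) (Finsupp.single (𝔾.inv g) w) =
        Finsupp.single (𝔾.r g) (P.act g x) := by
      rw [aux_skewMul_single_single]
      rw [dif_pos (𝔾.r_inv g).symm]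
      rw [P.act_inv g x hxD, hxw, 𝔾.mul_inv]
    have hfinI : Finsupp.single (𝔾.r g) (P.act g x) ∈ I := by
      rw [← hfin]
      exact (hImul _ hdI _ (aux_single_carrier P hw)).1
    refine ⟨Finsupp.single (𝔾.r g) (P.act g x),
      ⟨hfinI, aux_single_diag P (𝔾.r_idem g) (P.subset_r g (P.act_mem g x hxD))⟩, ?_⟩
    rw [aux_P0_single]
    exact if_pos (𝔾.r_idem g)
end

section
/- Let G be a groupoid, R an associative ring, and α = (D_g, α_g)_{g∈G} a partial action of G on R such that D_g is s-unital for every g ∈ G and R = ⊕_{e∈G₀} D_e. Let I be a two-sided ideal of S = R ⋊_α G, and set J = P₀(I), I₀ = I ∩ ⊕_{e∈G₀} D_e δ_e, and J₀ = P₀(I₀). Then: (i) I ⊆ J ⋊_{α^J} G; (ii) if b_t δ_t ∈ J₀ ⋊_{α^{J₀}} G for some t ∈ G and b_t ∈ D_t ∩ J₀, then b_t δ_{r(t)} ∈ I₀; (iii) J₀ ⋊_{α^{J₀}} G ⊆ I; (iv) J₀ ⋊_{α^{J₀}} G = S I₀ S. -/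
open scoped Classical

/-!
Call `a ∈ R ⋊_α G` *graded in `I`* if every homogeneous component `a_g δ_g` lies in `I`.
Local units make the passage between degrees `t` and `r t` reversible:
`(b δ_t)(α_{t⁻¹}(u) δ_{t⁻¹}) = b u δ_{r t}` and `(b δ_{r t})(v δ_t) = b v δ_t`. Hence
`b δ_t ∈ I` iff `b δ_{r t} ∈ I₀`, and since `R = ⊕ D_e` forces the element of `I₀` with
`P₀`-image `b ∈ D_t` to be `b δ_{r t}`, the elements graded in `I` are exactly
`J₀ ⋊ G`. A product of homogeneous elements is homogeneous, so these elements form an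
ideal; it contains `I₀` (multiply by `u δ_e` for a local unit `u` of `x_e`), hence
`S I₀ S`. Conversely `b δ_t = (u δ_{r t})(b δ_{r t})(v δ_t) ∈ S I₀ S`. Part (i) is the
same trick: `P₀(a · α_{g⁻¹}(u) δ_{g⁻¹}) = a_g u = a_g`.
-/

namespace DGroupoid

variable {G : Type*} {𝔾 : DGroupoid G}

lemma mul_congr {g g' h h' : G} (hg : g = g') (hh : h = h') (p : 𝔾.s g = 𝔾.r h)
    (p' : 𝔾.s g' = 𝔾.r h') : 𝔾.mul g h p = 𝔾.mul g' h' p' := by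
  subst hg hh; rfl

lemma unit_r (g : G) : 𝔾.unit (𝔾.r g) := 𝔾.r_idem g

lemma unit.s_eq {e : G} (he : 𝔾.unit e) : 𝔾.s e = e := by
  have h := 𝔾.s_of_r e
  rwa [he] at h

lemma unit.inv_eq {e : G} (he : 𝔾.unit e) : 𝔾.inv e = e := by
  have hre : 𝔾.r (𝔾.inv e) = e := by rw [𝔾.r_inv, he.s_eq]
  have p : 𝔾.s e = 𝔾.r (𝔾.inv e) := by rw [hre, he.s_eq]
  calc 𝔾.inv e = 𝔾.mul (𝔾.r (𝔾.inv e)) (𝔾.inv e) (𝔾.s_of_r _) :=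
        (𝔾.id_mul _ _).symm
    _ = 𝔾.mul e (𝔾.inv e) p := mul_congr hre rfl _ _
    _ = e := (𝔾.mul_inv e p).trans he

lemma eq_of_unit_mul_inv {g h : G} (p : 𝔾.s h = 𝔾.r (𝔾.inv g))
    (hu : 𝔾.unit (𝔾.mul h (𝔾.inv g) p)) : h = g := by
  have p₂ : 𝔾.s (𝔾.inv g) = 𝔾.r g := 𝔾.s_inv g
  have hsh : 𝔾.s h = 𝔾.s g := by rw [p, 𝔾.r_inv]
  have pq : 𝔾.s (𝔾.mul h (𝔾.inv g) p) = 𝔾.r g := by rw [𝔾.s_mul, p₂]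
  -- `h g⁻¹` is a unit, so it equals its range `r h`; its source is `r g`
  have hm : 𝔾.mul h (𝔾.inv g) p = 𝔾.r g := by
    have hrh : 𝔾.mul h (𝔾.inv g) p = 𝔾.r h := hu.symm.trans (𝔾.r_mul h (𝔾.inv g) p)
    have hs := pq
    rw [hrh, 𝔾.s_of_r] at hs
    rw [hrh, hs]
  have qp : 𝔾.s h = 𝔾.r (𝔾.mul (𝔾.inv g) g p₂) := by rw [𝔾.r_mul, 𝔾.r_inv, hsh]
  have qp' : 𝔾.s h = 𝔾.r (𝔾.s h) := (𝔾.r_of_s h).symm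
  calc h = 𝔾.mul h (𝔾.s h) qp' := (𝔾.mul_id h qp').symm
    _ = 𝔾.mul h (𝔾.mul (𝔾.inv g) g p₂) qp :=
        mul_congr rfl (by rw [𝔾.inv_mul, hsh]) _ _
    _ = 𝔾.mul (𝔾.mul h (𝔾.inv g) p) g pq := (𝔾.assoc _ _ _ _ _ _ _).symm
    _ = 𝔾.mul (𝔾.r g) g (𝔾.s_of_r g) := mul_congr hm rfl _ _
    _ = g := 𝔾.id_mul g _

end DGroupoid

namespace Finsupp

variable {G M : Type*} [AddCommMonoid M]

def gradedCore (I : AddSubmonoid (G →₀ M)) : AddSubmonoid (G →₀ M) where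
  carrier := {a | ∀ g, single g (a g) ∈ I}
  add_mem' {a b} ha hb g := by
    simpa only [add_apply, single_add] using I.add_mem (ha g) (hb g)
  zero_mem' g := by simpa only [coe_zero, Pi.zero_apply, single_zero] using I.zero_mem

variable {I : AddSubmonoid (G →₀ M)}

lemma gradedCore_le : gradedCore I ≤ I := fun a ha => by
  rw [← sum_single a]
  exact AddSubmonoid.sum_mem I fun g _ => ha g

lemma single_mem_gradedCore {m : G} {v : M} (h : single m v ∈ I) :
    single m v ∈ gradedCore I := fun g => by
  by_cases hg : m = g
  · subst hg; simpa only [single_eq_same] using h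
  · simpa only [single_eq_of_ne' hg, single_zero] using I.zero_mem

end Finsupp

namespace PartialAction

variable {G R : Type*} [NonUnitalRing R] {𝔾 : DGroupoid G} (P : PartialAction 𝔾 R)

lemma act_zero (g : G) : P.act g 0 = 0 := by
  have h := P.act_add g 0 (P.zero_mem _) 0 (P.zero_mem _)
  rw [add_zero] at h
  exact add_eq_left.mp h.symm

lemma sub_mem {g : G} {a b : R} (ha : a ∈ P.D g) (hb : b ∈ P.D g) : a - b ∈ P.D g := by
  rw [sub_eq_add_neg]
  exact P.add_mem g a ha _ (P.neg_mem g b hb)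

lemma act_inv_mem {g : G} {a : R} (ha : a ∈ P.D g) : P.act (𝔾.inv g) a ∈ P.D (𝔾.inv g) :=
  P.act_mem _ a (by rwa [𝔾.inv_inv])

lemma act_act_inv {g : G} {a : R} (ha : a ∈ P.D g) : P.act g (P.act (𝔾.inv g) a) = a := by
  simpa only [𝔾.inv_inv] using P.act_inv (𝔾.inv g) a (by rwa [𝔾.inv_inv])

lemma act_act_inv_mul_act_inv {g : G} {a u : R} (ha : a ∈ P.D g) (hu : u ∈ P.D g) :
    P.act g (P.act (𝔾.inv g) a * P.act (𝔾.inv g) u) = a * u := by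
  have hau : a * u ∈ P.D g := (P.idealInR g a ha u (P.subset_r g hu)).1
  rw [← P.act_mul _ a (by rwa [𝔾.inv_inv]) u (by rwa [𝔾.inv_inv]), P.act_act_inv hau]

lemma single_mem_carrier {g : G} {a : R} (ha : a ∈ P.D g) : Finsupp.single g a ∈ P.carrier :=
  fun k => by
    by_cases hk : g = k
    · subst hk; simpa only [Finsupp.single_eq_same] using ha
    · simpa only [Finsupp.single_eq_of_ne' hk] using P.zero_mem k

lemma single_mem_diag {e : G} (he : 𝔾.unit e) {a : R} (ha : a ∈ P.D e) :
    Finsupp.single e a ∈ P.diag :=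
  ⟨P.single_mem_carrier ha, fun k hk => by
    rwa [Finset.mem_singleton.mp (Finsupp.support_single_subset hk)]⟩

lemma skewMul_eq (a b : G →₀ R) {A B : Finset G} (hA : a.support ⊆ A) (hB : b.support ⊆ B) :
    P.skewMul a b = ∑ g ∈ A, ∑ h ∈ B,
      if p : 𝔾.s g = 𝔾.r h then
        Finsupp.single (𝔾.mul g h p) (P.act g (P.act (𝔾.inv g) (a g) * b h))
      else 0 := by
  unfold skewMul
  rw [Finset.sum_subset hA]
  · refine Finset.sum_congr rfl fun g _ => Finset.sum_subset hB fun h _ hh => ?_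
    rw [Finsupp.notMem_support_iff.mp hh]
    split <;> simp [P.act_zero]
  · intro g _ hg
    rw [Finsupp.notMem_support_iff.mp hg]
    refine Finset.sum_eq_zero fun h _ => ?_
    split <;> simp [P.act_zero]

lemma skewMul_single_single (g h : G) (a b : R) :
    P.skewMul (Finsupp.single g a) (Finsupp.single h b) =
      if p : 𝔾.s g = 𝔾.r h then
        Finsupp.single (𝔾.mul g h p) (P.act g (P.act (𝔾.inv g) a * b))
      else 0 := by
  rw [P.skewMul_eq _ _ Finsupp.support_single_subset Finsupp.support_single_subset]
  simp

lemma skewMul_eq_sum_single (a b : G →₀ R) {A B : Finset G} (hA : a.support ⊆ A)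
    (hB : b.support ⊆ B) : P.skewMul a b =
      ∑ g ∈ A, ∑ h ∈ B, P.skewMul (Finsupp.single g (a g)) (Finsupp.single h (b h)) := by
  simp only [P.skewMul_eq a b hA hB, P.skewMul_single_single]

lemma skewMul_single_left (g : G) (x : R) (b : G →₀ R) :
    P.skewMul (Finsupp.single g x) b =
      ∑ h ∈ b.support, P.skewMul (Finsupp.single g x) (Finsupp.single h (b h)) := by
  simp [P.skewMul_eq_sum_single _ b Finsupp.support_single_subset subset_rfl]

lemma skewMul_single_right (a : G →₀ R) (k : G) (y : R) :
    P.skewMul a (Finsupp.single k y) =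
      ∑ h ∈ a.support, P.skewMul (Finsupp.single h (a h)) (Finsupp.single k y) := by
  simp [P.skewMul_eq_sum_single a _ subset_rfl Finsupp.support_single_subset]

lemma skewMul_single_of_r_eq {e g : G} (he : 𝔾.r g = e) {b : R} (hb : b ∈ P.D e) (c : R) :
    P.skewMul (Finsupp.single e b) (Finsupp.single g c) = Finsupp.single g (b * c) := by
  subst he
  have hbc : b * c ∈ P.D (𝔾.r g) := ((P.idealR g).2.2.2 b hb c).1
  rw [P.skewMul_single_single, dif_pos (𝔾.s_of_r g), 𝔾.id_mul, (DGroupoid.unit_r g).inv_eq,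
    P.act_unit _ (DGroupoid.unit_r g) b hb, P.act_unit _ (DGroupoid.unit_r g) _ hbc]

lemma skewMul_single_single_inv (g : G) {a u : R} (ha : a ∈ P.D g) (hu : u ∈ P.D g) :
    P.skewMul (Finsupp.single g a) (Finsupp.single (𝔾.inv g) (P.act (𝔾.inv g) u)) =
      Finsupp.single (𝔾.r g) (a * u) := by
  have p : 𝔾.s g = 𝔾.r (𝔾.inv g) := (𝔾.r_inv g).symm
  rw [P.skewMul_single_single, dif_pos p, 𝔾.mul_inv, P.act_act_inv_mul_act_inv ha hu]

lemma P0_single (g : G) (v : R) :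
    P.P0 (Finsupp.single g v) = if 𝔾.unit g then v else 0 :=
  Finsupp.sum_single_index (by simp)

lemma P0_sum {ι : Type*} (s : Finset ι) (f : ι → G →₀ R) :
    P.P0 (∑ i ∈ s, f i) = ∑ i ∈ s, P.P0 (f i) :=
  (Finsupp.sum_finsetSum_index (fun _ => by simp) fun _ _ _ => by split <;> simp).symm

lemma P0_of_mem_diag {c : G →₀ R} (hc : c ∈ P.diag) : P.P0 c = c.sum fun _ v => v :=
  Finsupp.sum_congr fun g hg => if_pos (hc.2 g hg)

lemma P0_skewMul_single_single_inv (h g : G) (x y : R) :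
    P.P0 (P.skewMul (Finsupp.single h x) (Finsupp.single (𝔾.inv g) y)) =
      if h = g then P.act g (P.act (𝔾.inv g) x * y) else 0 := by
  rw [P.skewMul_single_single]
  by_cases hhg : h = g
  · subst hhg
    rw [dif_pos (𝔾.r_inv h).symm, P0_single, 𝔾.mul_inv, if_pos (DGroupoid.unit_r h),
      if_pos rfl]
  · rw [if_neg hhg]
    split
    · rw [P0_single, if_neg (mt (DGroupoid.eq_of_unit_mul_inv _) hhg)]
    · simp [P0]

lemma P0_skewMul_single_inv (a : G →₀ R) (g : G) (y : R) :
    P.P0 (P.skewMul a (Finsupp.single (𝔾.inv g) y)) =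
      P.act g (P.act (𝔾.inv g) (a g) * y) := by
  rw [P.skewMul_single_right, P.P0_sum]
  simp only [P.P0_skewMul_single_single_inv]
  rw [Finset.sum_ite_eq']
  split_ifs with hg
  · rfl
  · rw [Finsupp.notMem_support_iff.mp hg, P.act_zero, zero_mul, P.act_zero]

lemma eq_of_sum_eq_of_mem_diag (hds : P.directSum) {a b : G →₀ R} (ha : a ∈ P.diag)
    (hb : b ∈ P.diag) (h : (a.sum fun _ v => v) = b.sum fun _ v => v) : a = b := by
  refine sub_eq_zero.mp
    (hds.2 (a - b) (fun g hg => ?_) (fun g => P.sub_mem (ha.1 g) (hb.1 g)) ?_)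
  · rcases Finset.mem_union.mp (Finsupp.support_sub hg) with h | h
    exacts [ha.2 g h, hb.2 g h]
  · rw [Finsupp.sum_sub_index fun _ _ _ => rfl, h, sub_self]

/-- The generators `u x v` (`u, v ∈ R ⋊_α G`, `x ∈ X`) of the ideal `S X S`. -/
def sandwiches (X : Set (G →₀ R)) : Set (G →₀ R) :=
  {w | ∃ u ∈ P.carrier, ∃ x ∈ X, ∃ v ∈ P.carrier, w = P.skewMul (P.skewMul u x) v}

variable {P} {I : Set (G →₀ R)}

def IsSkewIdeal.toAddSubmonoid (hI : P.IsSkewIdeal I) : AddSubmonoid (G →₀ R) where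
  carrier := I
  add_mem' {a b} ha hb := hI.2.2.1 a ha b hb
  zero_mem' := hI.2.1

lemma IsSkewIdeal.mem_toAddSubmonoid (hI : P.IsSkewIdeal I) {x : G →₀ R} :
    x ∈ hI.toAddSubmonoid ↔ x ∈ I :=
  Iff.rfl

lemma IsSkewIdeal.skewMul_mem_right (hI : P.IsSkewIdeal I) {x y : G →₀ R} (hx : x ∈ I)
    (hy : y ∈ P.carrier) : P.skewMul x y ∈ I :=
  (hI.2.2.2.2 x hx y hy).1

lemma IsSkewIdeal.skewMul_mem_left (hI : P.IsSkewIdeal I) {x y : G →₀ R} (hx : x ∈ I)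
    (hy : y ∈ P.carrier) : P.skewMul y x ∈ I :=
  (hI.2.2.2.2 x hx y hy).2

lemma IsSkewIdeal.skewMul_single_single_mem_gradedCore (hI : P.IsSkewIdeal I) {g h : G}
    {x y : R} (hxy : P.skewMul (Finsupp.single g x) (Finsupp.single h y) ∈ I) :
    P.skewMul (Finsupp.single g x) (Finsupp.single h y) ∈
      Finsupp.gradedCore hI.toAddSubmonoid := by
  rw [P.skewMul_single_single] at hxy ⊢
  by_cases p : 𝔾.s g = 𝔾.r h
  · rw [dif_pos p] at hxy ⊢
    exact Finsupp.single_mem_gradedCore (hI.mem_toAddSubmonoid.mpr hxy)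
  · rw [dif_neg p]
    exact AddSubmonoid.zero_mem _

lemma IsSkewIdeal.skewMul_mem_gradedCore_of_left (hI : P.IsSkewIdeal I) {a b : G →₀ R}
    (ha : a ∈ Finsupp.gradedCore hI.toAddSubmonoid) (hb : b ∈ P.carrier) :
    P.skewMul a b ∈ Finsupp.gradedCore hI.toAddSubmonoid := by
  rw [P.skewMul_eq_sum_single a b subset_rfl subset_rfl]
  exact sum_mem fun g _ => sum_mem fun h _ => hI.skewMul_single_single_mem_gradedCore
    (hI.skewMul_mem_right (hI.mem_toAddSubmonoid.mp (ha g)) (P.single_mem_carrier (hb h)))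

lemma IsSkewIdeal.skewMul_mem_gradedCore_of_right (hI : P.IsSkewIdeal I) {a b : G →₀ R}
    (ha : a ∈ P.carrier) (hb : b ∈ Finsupp.gradedCore hI.toAddSubmonoid) :
    P.skewMul a b ∈ Finsupp.gradedCore hI.toAddSubmonoid := by
  rw [P.skewMul_eq_sum_single a b subset_rfl subset_rfl]
  exact sum_mem fun g _ => sum_mem fun h _ => hI.skewMul_single_single_mem_gradedCore
    (hI.skewMul_mem_left (hI.mem_toAddSubmonoid.mp (hb h)) (P.single_mem_carrier (ha g)))

variable (P)

lemma subset_skewOf_P0 (hsu : ∀ g, IsSUnitalSet (P.D g)) (hI : P.IsSkewIdeal I) :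
    I ⊆ P.skewOf (P.P0 '' I) := fun a ha g => by
  have hag := hI.1 ha g
  obtain ⟨u, hu, hau⟩ := (hsu g (a g) hag).1
  refine ⟨hag, _, hI.skewMul_mem_right ha (P.single_mem_carrier (P.act_inv_mem hu)), ?_⟩
  rw [P0_skewMul_single_inv, P.act_act_inv_mul_act_inv hag hu, hau]

lemma single_r_mem_of_mem_P0 (hds : P.directSum) {t : G} {b : R} (hb : b ∈ P.D t)
    (hbI : b ∈ P.P0 '' (I ∩ P.diag)) : Finsupp.single (𝔾.r t) b ∈ I ∩ P.diag := by
  obtain ⟨c, hc, rfl⟩ := hbI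
  suffices hc_eq : c = Finsupp.single (𝔾.r t) (P.P0 c) from hc_eq ▸ hc
  refine P.eq_of_sum_eq_of_mem_diag hds hc.2
    (P.single_mem_diag (DGroupoid.unit_r t) (P.subset_r t hb)) ?_
  rw [← P.P0_of_mem_diag hc.2, Finsupp.sum_single_index rfl]

lemma single_r_mem_of_single_mem (hsu : ∀ g, IsSUnitalSet (P.D g)) (hI : P.IsSkewIdeal I)
    {m : G} {d : R} (hd : d ∈ P.D m) (hmd : Finsupp.single m d ∈ I) :
    Finsupp.single (𝔾.r m) d ∈ I ∩ P.diag := by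
  obtain ⟨u, hu, hdu⟩ := (hsu m d hd).1
  refine ⟨?_, P.single_mem_diag (DGroupoid.unit_r m) (P.subset_r m hd)⟩
  rw [← hdu, ← P.skewMul_single_single_inv m hd hu]
  exact hI.skewMul_mem_right hmd (P.single_mem_carrier (P.act_inv_mem hu))

lemma mem_gradedCore_of_mem_diag (hsu : ∀ g, IsSUnitalSet (P.D g)) (hI : P.IsSkewIdeal I)
    {x : G →₀ R} (hx : x ∈ I ∩ P.diag) : x ∈ Finsupp.gradedCore hI.toAddSubmonoid := by
  intro e
  by_cases hex : e ∈ x.support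
  swap
  · rw [Finsupp.notMem_support_iff.mp hex, Finsupp.single_zero]
    exact AddSubmonoid.zero_mem _
  have he : 𝔾.unit e := hx.2.2 e hex
  obtain ⟨u, hu, hux⟩ := (hsu e (x e) (hx.2.1 e)).2
  -- `u δ_e` is a left unit for `x_e δ_e` and annihilates the other components of `x`
  have hmul : P.skewMul (Finsupp.single e u) x = Finsupp.single e (x e) := by
    rw [P.skewMul_single_left, Finset.sum_eq_single_of_mem e hex,
      P.skewMul_single_of_r_eq he hu, hux]
    intro h hh hne
    rw [P.skewMul_single_single, dif_neg]
    rw [he.s_eq, hx.2.2 h hh]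
    exact hne.symm
  rw [← hmul, hI.mem_toAddSubmonoid]
  exact hI.skewMul_mem_left hx.1 (P.single_mem_carrier hu)

lemma gradedCore_subset_skewOf (hsu : ∀ g, IsSUnitalSet (P.D g)) (hI : P.IsSkewIdeal I) :
    (Finsupp.gradedCore hI.toAddSubmonoid : Set (G →₀ R)) ⊆
      P.skewOf (P.P0 '' (I ∩ P.diag)) := fun a ha g => by
  have hag : a g ∈ P.D g := by simpa using hI.1 (ha g) g
  refine ⟨hag, _,
    P.single_r_mem_of_single_mem hsu hI hag (hI.mem_toAddSubmonoid.mp (ha g)), ?_⟩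
  rw [P0_single, if_pos (DGroupoid.unit_r g)]

lemma skewOf_subset_closure (hsu : ∀ g, IsSUnitalSet (P.D g)) (hds : P.directSum) :
    P.skewOf (P.P0 '' (I ∩ P.diag)) ⊆ AddSubmonoid.closure (P.sandwiches (I ∩ P.diag)) := by
  intro a ha
  rw [← Finsupp.sum_single a]
  refine AddSubmonoid.sum_mem _ fun g _ => AddSubmonoid.subset_closure ?_
  obtain ⟨hag, hagI⟩ := ha g
  obtain ⟨v, hv, hav⟩ := (hsu g (a g) hag).1
  obtain ⟨u, hu, hua⟩ := (hsu g (a g) hag).2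
  refine ⟨Finsupp.single (𝔾.r g) u, P.single_mem_carrier (P.subset_r g hu),
    Finsupp.single (𝔾.r g) (a g), P.single_r_mem_of_mem_P0 hds hag hagI,
    Finsupp.single g v, P.single_mem_carrier hv, ?_⟩
  rw [P.skewMul_single_of_r_eq (𝔾.r_idem g) (P.subset_r g hu), hua,
    P.skewMul_single_of_r_eq rfl (P.subset_r g hag), hav]

lemma closure_le_gradedCore (hsu : ∀ g, IsSUnitalSet (P.D g)) (hI : P.IsSkewIdeal I) :
    AddSubmonoid.closure (P.sandwiches (I ∩ P.diag)) ≤ Finsupp.gradedCore hI.toAddSubmonoid :=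
  AddSubmonoid.closure_le.mpr <| by
    rintro _ ⟨u, hu, x, hx, v, hv, rfl⟩
    exact hI.skewMul_mem_gradedCore_of_left
      (hI.skewMul_mem_gradedCore_of_right hu (P.mem_gradedCore_of_mem_diag hsu hI hx)) hv

end PartialAction

/-- Let `I` be a two-sided ideal of `S = R ⋊_α G`, `J = P₀(I)`,
`I₀ = I ∩ ⊕_{e ∈ G₀} D_e δ_e` and `J₀ = P₀(I₀)`. Then:
(i) `I ⊆ J ⋊_{α^J} G`;
(ii) if `b_t δ_t ∈ J₀ ⋊_{α^{J₀}} G` with `b_t ∈ D_t ∩ J₀`, then `b_t δ_{r t} ∈ I₀`;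
(iii) `J₀ ⋊_{α^{J₀}} G ⊆ I`;
(iv) `J₀ ⋊_{α^{J₀}} G = S I₀ S` (the set of finite sums of products `u x v` with
`u, v ∈ S`, `x ∈ I₀`). -/
theorem skew_ideal_structure {G R : Type*} [NonUnitalRing R]
    (𝔾 : DGroupoid G) (P : PartialAction 𝔾 R)
    (hsu : ∀ g, IsSUnitalSet (P.D g)) (hds : P.directSum)
    (I : Set (G →₀ R)) (hI : P.IsSkewIdeal I) :
    I ⊆ P.skewOf (P.P0 '' I) ∧
    (∀ t : G, ∀ b : R, b ∈ P.D t → b ∈ P.P0 '' (I ∩ P.diag) →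
      Finsupp.single (𝔾.r t) b ∈ I ∩ P.diag) ∧
    P.skewOf (P.P0 '' (I ∩ P.diag)) ⊆ I ∧
    P.skewOf (P.P0 '' (I ∩ P.diag)) =
      (AddSubmonoid.closure {w : G →₀ R | ∃ u ∈ P.carrier, ∃ x ∈ I ∩ P.diag,
        ∃ v ∈ P.carrier, w = P.skewMul (P.skewMul u x) v} : AddSubmonoid (G →₀ R)) := by
  have hgen := P.skewOf_subset_closure (I := I) hsu hds
  have hcore := P.closure_le_gradedCore hsu hI
  refine ⟨P.subset_skewOf_P0 hsu hI, fun t b => P.single_r_mem_of_mem_P0 hds,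
    fun a ha => Finsupp.gradedCore_le (hcore (hgen ha)), ?_⟩
  exact hgen.antisymm fun a ha => P.gradedCore_subset_skewOf hsu hI (hcore ha)
end
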